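/- The map σ(h) = ũ(det h)·h^{-1}·ũ(1) on the metaplectic cover G̃ of GL(2,F) is an involution: σ(σ(h)) = h for all h ∈ G̃. -/

import Mathlib

open Matrix

variable {F M : Type*}

/-- `X(m) = m₂₁` if nonzero, else `m₂₂`. -/
def Xe [Field F] [DecidableEq F] (m : Matrix (Fin 2) (Fin 2) F) : F :=
  if m 1 0 ≠ 0 then m 1 0 else m 1 1

/-- The Kubota–Kazhdan–Patterson 2-cocycle on `GL(2,F)` attached to a Hilbert symbol `hs`. -/
def kub [Field F] [DecidableEq F] [CommGroup M] (hs : F → F → M)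
    (g₁ g₂ : GL (Fin 2) F) : M :=
  hs (Xe ((g₁ * g₂ : GL (Fin 2) F) : Matrix (Fin 2) (Fin 2) F) /
        Xe (g₁ : Matrix (Fin 2) (Fin 2) F))
     (Xe ((g₁ * g₂ : GL (Fin 2) F) : Matrix (Fin 2) (Fin 2) F) /
        (Xe (g₂ : Matrix (Fin 2) (Fin 2) F) * (g₁ : Matrix (Fin 2) (Fin 2) F).det))

/-- Multiplication in the metaplectic cover `G̃ = GL(2,F) × μ_n`. -/
def mmul [Field F] [DecidableEq F] [CommGroup M] (hs : F → F → M)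
    (h₁ h₂ : GL (Fin 2) F × M) : GL (Fin 2) F × M :=
  (h₁.1 * h₂.1, kub hs h₁.1 h₂.1 * h₁.2 * h₂.2)

/-- Inversion in the metaplectic cover. -/
def minv [Field F] [DecidableEq F] [CommGroup M] (hs : F → F → M)
    (h : GL (Fin 2) F × M) : GL (Fin 2) F × M :=
  (h.1⁻¹, (kub hs h.1 h.1⁻¹)⁻¹ * h.2⁻¹)

/-- `z(λ) = λ I₂` as an element of `GL(2,F)`. -/
def zGL [Field F] (lam : Fˣ) : GL (Fin 2) F :=
  Units.map (Matrix.scalar (Fin 2)).toMonoidHom lam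

/-- `z̃(λ) = (λ I₂, 1)`. -/
def ztil [Field F] [CommGroup M] (lam : Fˣ) : GL (Fin 2) F × M := (zGL lam, 1)

/-- `u(λ) = diag(λ, -λ)` as an element of `GL(2,F)`. -/
def uGL [Field F] (lam : Fˣ) : GL (Fin 2) F :=
  ⟨!![(lam : F), 0; 0, -(lam : F)], !![((lam⁻¹ : Fˣ) : F), 0; 0, -((lam⁻¹ : Fˣ) : F)],
    by simp [Matrix.mul_fin_two, Matrix.one_fin_two],
    by simp [Matrix.mul_fin_two, Matrix.one_fin_two]⟩

/-- `ũ(λ) = (u(λ), 1)`. -/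
def util [Field F] [CommGroup M] (lam : Fˣ) : GL (Fin 2) F × M := (uGL lam, 1)

/-- The determinant of an element of `GL(2,F)`, as a unit of `F`. -/
def detU [Field F] (g : GL (Fin 2) F) : Fˣ := Units.map Matrix.detMonoidHom g

/-- The lift `σ(h) = ũ(det h) h⁻¹ ũ(1)` of the standard involution. -/
def sigmaM [Field F] [DecidableEq F] [CommGroup M] (hs : F → F → M)
    (h : GL (Fin 2) F × M) : GL (Fin 2) F × M :=
  mmul hs (mmul hs (util (detU h.1)) (minv hs h)) (util 1)

/-! Write `(x, y)` for `hs x y` and `g = !![a, b; c, d]`. On matrices, `g ↦ u(det g) g⁻¹ u(1)`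
is `!![d, b; c, a]`, an involution of `GL(2,F)` preserving `c` and `det g`. So
`σ(g, ε) = (g', κ(g) ε⁻¹)`, where `κ(g)` is a product of three values of the Kubota cocycle, and
`σ(σ(h)) = h` reduces to `κ(g') = κ(g)`. Evaluating the cocycle gives
`κ(g) = (-c / det g, (det g)⁻¹)` if `c ≠ 0` and `κ(g) = 1` if `c = 0`, which depends only on `c`
and `det g`. Both evaluations rest on `(x, -x) = 1`, a consequence of the Steinberg relation and
bimultiplicativity. -/

section HilbertSymbol

variable [Field F] [CommGroup M] {hs : F → F → M}

theorem hs_one_left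
    (hmul_left : ∀ a b c : F, a ≠ 0 → b ≠ 0 → c ≠ 0 → hs (a * b) c = hs a c * hs b c)
    {x : F} (hx : x ≠ 0) : hs 1 x = 1 := by
  simpa using hmul_left 1 1 x one_ne_zero one_ne_zero hx

theorem hs_one_right
    (hmul_right : ∀ a b c : F, a ≠ 0 → b ≠ 0 → c ≠ 0 → hs a (b * c) = hs a b * hs a c)
    {x : F} (hx : x ≠ 0) : hs x 1 = 1 := by
  simpa using hmul_right x 1 1 hx one_ne_zero one_ne_zero

theorem hs_inv_left
    (hmul_left : ∀ a b c : F, a ≠ 0 → b ≠ 0 → c ≠ 0 → hs (a * b) c = hs a c * hs b c)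
    {x y : F} (hx : x ≠ 0) (hy : y ≠ 0) : hs x⁻¹ y = (hs x y)⁻¹ := by
  have h := hmul_left x x⁻¹ y hx (inv_ne_zero hx) hy
  rw [mul_inv_cancel₀ hx, hs_one_left hmul_left hy] at h
  exact eq_inv_of_mul_eq_one_right h.symm

theorem hs_inv_right
    (hmul_right : ∀ a b c : F, a ≠ 0 → b ≠ 0 → c ≠ 0 → hs a (b * c) = hs a b * hs a c)
    {x y : F} (hx : x ≠ 0) (hy : y ≠ 0) : hs x y⁻¹ = (hs x y)⁻¹ := by
  have h := hmul_right x y y⁻¹ hx hy (inv_ne_zero hy)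
  rw [mul_inv_cancel₀ hy, hs_one_right hmul_right hx] at h
  exact eq_inv_of_mul_eq_one_right h.symm

theorem hs_self_neg
    (hmul_left : ∀ a b c : F, a ≠ 0 → b ≠ 0 → c ≠ 0 → hs (a * b) c = hs a c * hs b c)
    (hmul_right : ∀ a b c : F, a ≠ 0 → b ≠ 0 → c ≠ 0 → hs a (b * c) = hs a b * hs a c)
    (hsteinberg : ∀ a : F, a ≠ 0 → 1 - a ≠ 0 → hs a (1 - a) = 1)
    {x : F} (hx : x ≠ 0) : hs x (-x) = 1 := by
  rcases eq_or_ne x 1 with rfl | hx1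
  · exact hs_one_left hmul_left (neg_ne_zero.mpr one_ne_zero)
  have h1x : 1 - x ≠ 0 := sub_ne_zero.mpr hx1.symm
  have h1x' : 1 - x⁻¹ ≠ 0 := sub_ne_zero.mpr (by simpa [eq_comm] using hx1)
  have hsteinberg' : hs x (1 - x⁻¹) = 1 := by
    have h := hs_inv_left hmul_left (inv_ne_zero hx) h1x'
    rwa [inv_inv, hsteinberg _ (inv_ne_zero hx) h1x', inv_one] at h
  have hneg : -x = (1 - x) * (1 - x⁻¹)⁻¹ := by
    field_simp
    ring
  rw [hneg, hmul_right _ _ _ hx h1x (inv_ne_zero h1x'), hsteinberg x hx h1x,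
    hs_inv_right hmul_right hx h1x', hsteinberg', inv_one, one_mul]

end HilbertSymbol

section Matrices

variable [Field F]

theorem coe_GL_inv_fin_two (g : GL (Fin 2) F) :
    ((g⁻¹ : GL (Fin 2) F) : Matrix (Fin 2) (Fin 2) F) =
      (g.val.det)⁻¹ • !![g 1 1, -g 0 1; -g 1 0, g 0 0] := by
  rw [Matrix.coe_units_inv, Matrix.inv_def, Ring.inverse_eq_inv, Matrix.eta_fin_two g.val,
    adjugate_fin_two_of, ← Matrix.eta_fin_two g.val]

theorem coe_uGL (lam : Fˣ) :
    ((uGL lam : GL (Fin 2) F) : Matrix (Fin 2) (Fin 2) F) = !![(lam : F), 0; 0, -(lam : F)] :=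
  rfl

theorem coe_uGL_detU_mul_inv (g : GL (Fin 2) F) :
    ((uGL (detU g) * g⁻¹ : GL (Fin 2) F) : Matrix (Fin 2) (Fin 2) F) =
      !![g 1 1, -g 0 1; g 1 0, -g 0 0] := by
  have hdet := g.det_ne_zero
  rw [Units.val_mul, coe_GL_inv_fin_two, coe_uGL]
  ext i j
  fin_cases i <;> fin_cases j <;> simp [Matrix.mul_apply, detU] <;> field_simp

theorem det_uGL (lam : Fˣ) : (uGL lam).val.det = -lam ^ 2 := by
  rw [coe_uGL, det_fin_two_of]
  ring

theorem det_uGL_detU_mul_inv (g : GL (Fin 2) F) :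
    (uGL (detU g) * g⁻¹).val.det = -g.val.det := by
  rw [coe_uGL_detU_mul_inv, det_fin_two_of, det_fin_two]
  ring

def sigmaGL (g : GL (Fin 2) F) : GL (Fin 2) F := uGL (detU g) * g⁻¹ * uGL 1

theorem coe_sigmaGL (g : GL (Fin 2) F) :
    ((sigmaGL g : GL (Fin 2) F) : Matrix (Fin 2) (Fin 2) F) =
      !![g 1 1, g 0 1; g 1 0, g 0 0] := by
  rw [sigmaGL, Units.val_mul, coe_uGL_detU_mul_inv, coe_uGL]
  simp

theorem det_sigmaGL (g : GL (Fin 2) F) : (sigmaGL g).val.det = g.val.det := by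
  rw [coe_sigmaGL, det_fin_two_of, det_fin_two]
  ring

theorem sigmaGL_sigmaGL (g : GL (Fin 2) F) : sigmaGL (sigmaGL g) = g := by
  ext : 1
  rw [coe_sigmaGL, Matrix.eta_fin_two g.val]
  simp [coe_sigmaGL]

end Matrices

section Factor

variable [Field F] [DecidableEq F] [CommGroup M]

def sigmaFactor (hs : F → F → M) (g : GL (Fin 2) F) : M :=
  kub hs (uGL (detU g) * g⁻¹) (uGL 1) * kub hs (uGL (detU g)) g⁻¹ * (kub hs g g⁻¹)⁻¹

theorem sigmaM_eq (hs : F → F → M) (h : GL (Fin 2) F × M) :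
    sigmaM hs h = (sigmaGL h.1, sigmaFactor hs h.1 * h.2⁻¹) := by
  simp only [sigmaM, mmul, minv, util, sigmaGL, sigmaFactor, mul_one, mul_assoc]

theorem Xe_of_ne_zero {m : Matrix (Fin 2) (Fin 2) F} (h : m 1 0 ≠ 0) : Xe m = m 1 0 := if_pos h

theorem Xe_of_eq_zero {m : Matrix (Fin 2) (Fin 2) F} (h : m 1 0 = 0) : Xe m = m 1 1 :=
  if_neg (not_not.mpr h)

theorem Xe_uGL (lam : Fˣ) : Xe (uGL lam).val = -lam := Xe_of_eq_zero rfl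

theorem Xe_one : Xe (1 : GL (Fin 2) F).val = 1 := Xe_of_eq_zero (by simp)

theorem sigmaFactor_of_ne_zero (hs : F → F → M)
    (hmul_left : ∀ a b c : F, a ≠ 0 → b ≠ 0 → c ≠ 0 → hs (a * b) c = hs a c * hs b c)
    (hmul_right : ∀ a b c : F, a ≠ 0 → b ≠ 0 → c ≠ 0 → hs a (b * c) = hs a b * hs a c)
    (hsteinberg : ∀ a : F, a ≠ 0 → 1 - a ≠ 0 → hs a (1 - a) = 1)
    {g : GL (Fin 2) F} (hc : g 1 0 ≠ 0) :
    sigmaFactor hs g = hs (-g 1 0 / g.val.det) (g.val.det)⁻¹ := by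
  have hΔ := g.det_ne_zero
  have X_sigma : Xe (sigmaGL g).val = g 1 0 := by
    rw [coe_sigmaGL]
    exact Xe_of_ne_zero hc
  have X_t : Xe (uGL (detU g) * g⁻¹).val = g 1 0 := by
    rw [coe_uGL_detU_mul_inv]
    exact Xe_of_ne_zero hc
  have X_inv : Xe (g⁻¹).val = -g 1 0 / g.val.det := by
    rw [coe_GL_inv_fin_two, Xe_of_ne_zero (by simpa using ⟨hΔ, hc⟩)]
    simp [div_eq_inv_mul]
  unfold sigmaFactor kub
  rw [show uGL (detU g) * g⁻¹ * uGL 1 = sigmaGL g from rfl, mul_inv_cancel, X_sigma, X_t, X_inv,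
    det_uGL_detU_mul_inv, Xe_uGL, Xe_uGL, det_uGL, Xe_one, Xe_of_ne_zero hc]
  simp only [detU, Units.coe_map, coe_detMonoidHom, Units.val_one]
  set c := g 1 0
  set Δ := g.val.det
  have e1 : c / (-c / Δ * -Δ ^ 2) = Δ⁻¹ := by field_simp
  have e2 : 1 / (-c / Δ * Δ) = -c⁻¹ := by field_simp
  rw [div_self hc, e1, e2, hs_one_left hmul_left (by simpa using ⟨hc, hΔ⟩), div_neg, ← neg_div,
    one_div, hs_self_neg hmul_left hmul_right hsteinberg (inv_ne_zero hc), inv_one, one_mul,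
    mul_one]

theorem sigmaFactor_of_eq_zero (hs : F → F → M)
    (hmul_left : ∀ a b c : F, a ≠ 0 → b ≠ 0 → c ≠ 0 → hs (a * b) c = hs a c * hs b c)
    (hmul_right : ∀ a b c : F, a ≠ 0 → b ≠ 0 → c ≠ 0 → hs a (b * c) = hs a b * hs a c)
    (hsteinberg : ∀ a : F, a ≠ 0 → 1 - a ≠ 0 → hs a (1 - a) = 1)
    {g : GL (Fin 2) F} (hc : g 1 0 = 0) : sigmaFactor hs g = 1 := by
  have hΔ : g.val.det = g 0 0 * g 1 1 := by
    rw [det_fin_two, hc, mul_zero, sub_zero]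
  have ha : g 0 0 ≠ 0 := left_ne_zero_of_mul (hΔ ▸ g.det_ne_zero)
  have hd : g 1 1 ≠ 0 := right_ne_zero_of_mul (hΔ ▸ g.det_ne_zero)
  have X_sigma : Xe (sigmaGL g).val = g 0 0 := by
    rw [coe_sigmaGL]
    exact Xe_of_eq_zero hc
  have X_t : Xe (uGL (detU g) * g⁻¹).val = -g 0 0 := by
    rw [coe_uGL_detU_mul_inv]
    exact Xe_of_eq_zero hc
  have X_inv : Xe (g⁻¹).val = (g.val.det)⁻¹ * g 0 0 := by
    rw [coe_GL_inv_fin_two, Xe_of_eq_zero (by simp [hc])]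
    simp
  unfold sigmaFactor kub
  rw [show uGL (detU g) * g⁻¹ * uGL 1 = sigmaGL g from rfl, mul_inv_cancel, X_sigma, X_t, X_inv,
    det_uGL_detU_mul_inv, Xe_uGL, Xe_uGL, det_uGL, Xe_one, Xe_of_eq_zero hc]
  simp only [detU, Units.coe_map, coe_detMonoidHom, Units.val_one]
  rw [hΔ]
  set a := g 0 0
  set d := g 1 1
  have e1 : a / -a = -1 := by field_simp
  have e2 : a / (-1 * -(a * d)) = d⁻¹ := by field_simp
  have e3 : -a / -(a * d) = d⁻¹ := by field_simp
  have e4 : -a / ((a * d)⁻¹ * a * -(a * d) ^ 2) = d⁻¹ * a⁻¹ := by field_simp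
  have e5 : 1 / ((a * d)⁻¹ * a * (a * d)) = a⁻¹ := by field_simp
  rw [e1, e2, e3, e4, e5, one_div,
    hmul_right _ _ _ (inv_ne_zero hd) (inv_ne_zero hd) (inv_ne_zero ha), ← mul_assoc,
    mul_inv_cancel_right, ← hmul_left _ _ _ (by simp) (inv_ne_zero hd) (inv_ne_zero hd),
    neg_one_mul]
  simpa only [neg_neg] using
    hs_self_neg hmul_left hmul_right hsteinberg (neg_ne_zero.mpr (inv_ne_zero hd))

theorem sigmaFactor_sigmaGL (hs : F → F → M)
    (hmul_left : ∀ a b c : F, a ≠ 0 → b ≠ 0 → c ≠ 0 → hs (a * b) c = hs a c * hs b c)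
    (hmul_right : ∀ a b c : F, a ≠ 0 → b ≠ 0 → c ≠ 0 → hs a (b * c) = hs a b * hs a c)
    (hsteinberg : ∀ a : F, a ≠ 0 → 1 - a ≠ 0 → hs a (1 - a) = 1) (g : GL (Fin 2) F) :
    sigmaFactor hs (sigmaGL g) = sigmaFactor hs g := by
  have hc : sigmaGL g 1 0 = g 1 0 := by simp [coe_sigmaGL]
  by_cases h0 : g 1 0 = 0
  · rw [sigmaFactor_of_eq_zero hs hmul_left hmul_right hsteinberg (hc ▸ h0),
      sigmaFactor_of_eq_zero hs hmul_left hmul_right hsteinberg h0]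
  · rw [sigmaFactor_of_ne_zero hs hmul_left hmul_right hsteinberg (hc ▸ h0),
      sigmaFactor_of_ne_zero hs hmul_left hmul_right hsteinberg h0, hc, det_sigmaGL]

end Factor

theorem sigma_involution_general [Field F] [DecidableEq F] [CommGroup M] (hs : F → F → M)
    (hmul_left : ∀ a b c : F, a ≠ 0 → b ≠ 0 → c ≠ 0 → hs (a * b) c = hs a c * hs b c)
    (hmul_right : ∀ a b c : F, a ≠ 0 → b ≠ 0 → c ≠ 0 → hs a (b * c) = hs a b * hs a c)
    (hsteinberg : ∀ a : F, a ≠ 0 → 1 - a ≠ 0 → hs a (1 - a) = 1)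
    (h : GL (Fin 2) F × M) :
    sigmaM hs (sigmaM hs h) = h := by
  rw [sigmaM_eq, sigmaM_eq, sigmaGL_sigmaGL,
    sigmaFactor_sigmaGL hs hmul_left hmul_right hsteinberg, mul_inv, inv_inv, mul_inv_cancel_left]

/-- The map `σ(h) = ũ(det h) h⁻¹ ũ(1)` on the metaplectic cover is an involution:
`σ(σ(h)) = h`. -/
theorem sigma_involution [Field F] [DecidableEq F] [CommGroup M] (hs : F → F → M)
    (hmul_left : ∀ a b c : F, a ≠ 0 → b ≠ 0 → c ≠ 0 → hs (a * b) c = hs a c * hs b c)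
    (hmul_right : ∀ a b c : F, a ≠ 0 → b ≠ 0 → c ≠ 0 → hs a (b * c) = hs a b * hs a c)
    (hantisym : ∀ a b : F, a ≠ 0 → b ≠ 0 → hs a b * hs b a = 1)
    (hsteinberg : ∀ a : F, a ≠ 0 → 1 - a ≠ 0 → hs a (1 - a) = 1)
    (h : GL (Fin 2) F × M) :
    sigmaM hs (sigmaM hs h) = h :=
  sigma_involution_general hs hmul_left hmul_right hsteinberg h
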